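/- arXiv:2003.08613 — 4 statements merged into one kernel-verified Lean document; each statement's English description precedes it below -/
import Mathlib

section
/- Let Δ be a real p×q matrix and P a real symmetric (q+p)×(q+p) matrix. If the p×p matrix [−Δᵀ; I_p]ᵀ P [−Δᵀ; I_p] is negative definite and the q×q matrix [I_q; −D₁₁ᵀ]ᵀ P [I_q; −D₁₁ᵀ] is positive definite, then the matrix I_q − D₁₁Δ is invertible (well-posedness step in the proof of Theorem 1). -/
/-!
If `I - D₁₁Δ` were singular, so would be `I - ΔD₁₁`, giving `v ≠ 0` with `vᵀΔD₁₁ = vᵀ`. Then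
`[-Δᵀ; I] v = [I; -D₁₁ᵀ] u` for `u = -Δᵀv`, and the quadratic form of `P` would be negative and
nonnegative at this same vector.
-/

open Matrix

namespace Matrix

variable {m n k : Type*} [Fintype m] [Fintype n] [Fintype k]

theorem dotProduct_transpose_mul_mul_mulVec {R : Type*} [CommSemiring R]
    (P : Matrix m m R) (M : Matrix m n R) (w : n → R) :
    w ⬝ᵥ (Mᵀ * P * M) *ᵥ w = (M *ᵥ w) ⬝ᵥ P *ᵥ (M *ᵥ w) := by
  rw [← mulVec_mulVec, ← mulVec_mulVec, dotProduct_mulVec, vecMul_transpose]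

theorem eq_zero_of_mulVec_eq_mulVec {P : Matrix m m ℝ} {A : Matrix m n ℝ} {B : Matrix m k ℝ}
    (hA : (-(Aᵀ * P * A)).PosDef) (hB : (Bᵀ * P * B).PosSemidef) {v : n → ℝ} {u : k → ℝ}
    (h : A *ᵥ v = B *ᵥ u) : v = 0 := by
  by_contra hv
  have hneg := hA.dotProduct_mulVec_pos hv
  have hnonneg := hB.dotProduct_mulVec_nonneg u
  rw [neg_mulVec, dotProduct_neg, star_trivial, dotProduct_transpose_mul_mul_mulVec] at hneg
  rw [star_trivial, dotProduct_transpose_mul_mul_mulVec, ← h] at hnonneg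
  linarith

theorem exists_vecMul_vecMul_eq_self_of_not_isUnit_one_sub_mul {K : Type*} [Field K]
    [DecidableEq m] [DecidableEq n] {D : Matrix m n K} {Δ : Matrix n m K}
    (h : ¬IsUnit (1 - D * Δ)) : ∃ v ≠ 0, v ᵥ* Δ ᵥ* D = v := by
  rw [isUnit_iff_isUnit_det, isUnit_iff_ne_zero, not_not, det_one_sub_mul_comm,
    ← exists_vecMul_eq_zero_iff] at h
  obtain ⟨v, hv, hker⟩ := h
  refine ⟨v, hv, ?_⟩
  rwa [vecMul_sub, vecMul_one, sub_eq_zero, ← vecMul_vecMul, eq_comm] at hker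

end Matrix

theorem stmt2_general {p q : ℕ} (D₁₁ : Matrix (Fin q) (Fin p) ℝ)
    (Δ : Matrix (Fin p) (Fin q) ℝ)
    (P : Matrix (Fin q ⊕ Fin p) (Fin q ⊕ Fin p) ℝ)
    (hneg : (-((fromRows (-Δᵀ) (1 : Matrix (Fin p) (Fin p) ℝ))ᵀ * P *
        fromRows (-Δᵀ) (1 : Matrix (Fin p) (Fin p) ℝ))).PosDef)
    (hpos : ((fromRows (1 : Matrix (Fin q) (Fin q) ℝ) (-D₁₁ᵀ))ᵀ * P *
        fromRows (1 : Matrix (Fin q) (Fin q) ℝ) (-D₁₁ᵀ)).PosDef) :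
    IsUnit (1 - D₁₁ * Δ) := by
  by_contra h
  obtain ⟨v, hv, hfix⟩ := exists_vecMul_vecMul_eq_self_of_not_isUnit_one_sub_mul h
  refine hv (eq_zero_of_mulVec_eq_mulVec hneg hpos.posSemidef (u := -(v ᵥ* Δ)) ?_)
  simp only [mulVec_neg, fromRows_mulVec, one_mulVec, neg_mulVec, mulVec_transpose, hfix,
    ← Sum.elim_neg_neg, neg_neg]

/-- well-posedness step in the proof of Theorem 1. -/
theorem stmt2 {p q : ℕ} (D₁₁ : Matrix (Fin q) (Fin p) ℝ)
    (Δ : Matrix (Fin p) (Fin q) ℝ)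
    (P : Matrix (Fin q ⊕ Fin p) (Fin q ⊕ Fin p) ℝ) (hPsymm : P.IsSymm)
    (hneg : (-((fromRows (-Δᵀ) (1 : Matrix (Fin p) (Fin p) ℝ))ᵀ * P *
        fromRows (-Δᵀ) (1 : Matrix (Fin p) (Fin p) ℝ))).PosDef)
    (hpos : ((fromRows (1 : Matrix (Fin q) (Fin q) ℝ) (-D₁₁ᵀ))ᵀ * P *
        fromRows (1 : Matrix (Fin q) (Fin q) ℝ) (-D₁₁ᵀ)).PosDef) :
    IsUnit (1 - D₁₁ * Δ) :=
  stmt2_general D₁₁ Δ P hneg hpos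
end

section
/- Suppose Y is a real symmetric n×n matrix, M is a real r×n matrix, and P is a real symmetric (q+p)×(q+p) matrix for which LMI (1b) holds. Let Δ be a real p×q matrix such that I_q − D₁₁Δ is invertible and such that [−Δᵀ; I_p]ᵀ P [−Δᵀ; I_p] is negative definite. Then, with W := Δ(I_q − D₁₁Δ)⁻¹, the matrix (Ā + B₁WC̄₁) + (Ā + B₁WC̄₁)ᵀ is negative definite (the multiplier elimination step yielding the closed-loop Lyapunov inequality in the proof of Theorem 1). -/
/-!
Congruence of LMI (1b) by the injective matrix `[I; K]` with `K = Wᵀ B₁ᵀ` turns its outer factor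
into `[I; -Nᵀ; [-Δᵀ; I] E]`, where `N = Ā + B₁ W C̄₁` and `E = -B₁ᵀ - D₁₁ᵀ K`: the loop identity
`W = Δ + W D₁₁ Δ` is exactly what makes `-Δᵀ E = K`. Hence `-(N + Nᵀ)` is a positive definite
matrix plus `Eᵀ (-[-Δᵀ; I]ᵀ P [-Δᵀ; I]) E`, which is positive semidefinite by the multiplier
inequality for `Δ`.
-/

open Matrix

noncomputable section

/-- A real square matrix is Hurwitz if every eigenvalue of the associated
complex matrix has negative real part. -/
def IsHurwitz {k : ℕ} (A : Matrix (Fin k) (Fin k) ℝ) : Prop :=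
  ∀ μ ∈ spectrum ℂ (A.map Complex.ofReal), μ.re < 0

/-- Multiplier property: `[−Δᵀ; I_p]ᵀ P [−Δᵀ; I_p] ≺ 0` for every `Δ` in the set. -/
def MultProp {p q : ℕ} (P : Matrix (Fin q ⊕ Fin p) (Fin q ⊕ Fin p) ℝ)
    (Δs : Set (Matrix (Fin p) (Fin q) ℝ)) : Prop :=
  ∀ Δ ∈ Δs,
    (-((fromRows (-Δᵀ) (1 : Matrix (Fin p) (Fin p) ℝ))ᵀ * P *
        fromRows (-Δᵀ) (1 : Matrix (Fin p) (Fin p) ℝ))).PosDef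

/-- LMI (1b): `Tᵀ · blkdiag([[0, I],[I, 0]], P) · T ≻ 0` with the block rows
`[I, 0]`, `[−Āᵀ, −C̄₁ᵀ]`, `[0, I]`, `[−B₁ᵀ, −D₁₁ᵀ]` of `T`. -/
def LMI1b {n p q r : ℕ} (A : Matrix (Fin n) (Fin n) ℝ) (B₁ : Matrix (Fin n) (Fin p) ℝ)
    (B₃ : Matrix (Fin n) (Fin r) ℝ) (C₁ : Matrix (Fin q) (Fin n) ℝ)
    (D₁₁ : Matrix (Fin q) (Fin p) ℝ) (D₁₃ : Matrix (Fin q) (Fin r) ℝ)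
    (Y : Matrix (Fin n) (Fin n) ℝ) (M : Matrix (Fin r) (Fin n) ℝ)
    (P : Matrix (Fin q ⊕ Fin p) (Fin q ⊕ Fin p) ℝ) : Prop :=
  let Ab := A * Y + B₃ * M
  let Cb₁ := C₁ * Y + D₁₃ * M
  let T : Matrix ((Fin n ⊕ Fin n) ⊕ (Fin q ⊕ Fin p)) (Fin n ⊕ Fin q) ℝ :=
    fromRows (fromBlocks 1 0 (-Abᵀ) (-Cb₁ᵀ)) (fromBlocks 0 1 (-B₁ᵀ) (-D₁₁ᵀ))
  let Mid : Matrix ((Fin n ⊕ Fin n) ⊕ (Fin q ⊕ Fin p)) ((Fin n ⊕ Fin n) ⊕ (Fin q ⊕ Fin p)) ℝ :=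
    fromBlocks (fromBlocks 0 1 1 0) 0 0 P
  (Tᵀ * Mid * T).PosDef

namespace Matrix

variable {R : Type*} {k l m n : Type*}

theorem mul_nonsing_inv_one_sub_mul_eq [CommRing R] [Fintype k] [DecidableEq k] [Fintype m]
    (Δ : Matrix m k R) (D : Matrix k m R) (h : IsUnit (1 - D * Δ)) :
    Δ * (1 - D * Δ)⁻¹ = Δ + Δ * (1 - D * Δ)⁻¹ * D * Δ := by
  have hinv : (1 - D * Δ)⁻¹ * (1 - D * Δ) = 1 :=
    nonsing_inv_mul _ ((isUnit_iff_isUnit_det _).mp h)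
  calc Δ * (1 - D * Δ)⁻¹ = Δ * (1 - D * Δ)⁻¹ * ((1 - D * Δ) + D * Δ) := by simp
    _ = Δ + Δ * (1 - D * Δ)⁻¹ * D * Δ := by
      rw [Matrix.mul_add, Matrix.mul_assoc Δ _ (1 - D * Δ), hinv, Matrix.mul_one,
        Matrix.mul_assoc _ D]

theorem fromRows_one_mulVec_injective [Semiring R] [Fintype n] [DecidableEq n] (K : Matrix m n R) :
    Function.Injective (fromRows (1 : Matrix n n R) K).mulVec := by
  intro x y hxy
  funext i
  simpa [fromRows_mulVec] using congrFun hxy (Sum.inl i)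

theorem transpose_fromRows_mul_fromBlocks_mul_fromRows [Semiring R] [Fintype k] [Fintype l]
    (X : Matrix k n R) (Z : Matrix l n R) (J : Matrix k k R) (P : Matrix l l R) :
    (fromRows X Z)ᵀ * fromBlocks J 0 0 P * fromRows X Z = Xᵀ * J * X + Zᵀ * P * Z := by
  rw [transpose_fromRows, fromCols_mul_fromBlocks, fromCols_mul_fromRows]
  simp

theorem transpose_fromRows_one_mul_swap_mul [Semiring R] [Fintype n] [DecidableEq n]
    (X : Matrix n n R) :
    (fromRows (1 : Matrix n n R) X)ᵀ * (fromBlocks 0 1 1 0 : Matrix (n ⊕ n) (n ⊕ n) R) *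
      fromRows (1 : Matrix n n R) X = X + Xᵀ := by
  rw [transpose_fromRows, fromCols_mul_fromBlocks, fromCols_mul_fromRows]
  simp [add_comm]

end Matrix

theorem LMI1b.posDef_congr_fromRows_one {n p q r : ℕ} {A : Matrix (Fin n) (Fin n) ℝ}
    {B₁ : Matrix (Fin n) (Fin p) ℝ} {B₃ : Matrix (Fin n) (Fin r) ℝ} {C₁ : Matrix (Fin q) (Fin n) ℝ}
    {D₁₁ : Matrix (Fin q) (Fin p) ℝ} {D₁₃ : Matrix (Fin q) (Fin r) ℝ} {Y : Matrix (Fin n) (Fin n) ℝ}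
    {M : Matrix (Fin r) (Fin n) ℝ} {P : Matrix (Fin q ⊕ Fin p) (Fin q ⊕ Fin p) ℝ}
    (h : LMI1b A B₁ B₃ C₁ D₁₁ D₁₃ Y M P) (K : Matrix (Fin q) (Fin n) ℝ) :
    (-(A * Y + B₃ * M)ᵀ - (C₁ * Y + D₁₃ * M)ᵀ * K +
      (-(A * Y + B₃ * M)ᵀ - (C₁ * Y + D₁₃ * M)ᵀ * K)ᵀ +
      (fromRows K (-B₁ᵀ - D₁₁ᵀ * K))ᵀ * P * fromRows K (-B₁ᵀ - D₁₁ᵀ * K)).PosDef := by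
  set X := -(A * Y + B₃ * M)ᵀ - (C₁ * Y + D₁₃ * M)ᵀ * K
  set Z := fromRows K (-B₁ᵀ - D₁₁ᵀ * K)
  dsimp only [LMI1b] at h
  set T : Matrix ((Fin n ⊕ Fin n) ⊕ (Fin q ⊕ Fin p)) (Fin n ⊕ Fin q) ℝ :=
    fromRows (fromBlocks 1 0 (-(A * Y + B₃ * M)ᵀ) (-(C₁ * Y + D₁₃ * M)ᵀ))
      (fromBlocks 0 1 (-B₁ᵀ) (-D₁₁ᵀ))
  set U := fromRows (1 : Matrix (Fin n) (Fin n) ℝ) K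
  have hTU : T * U = fromRows (fromRows 1 X) Z := by
    simp only [T, U, X, Z, fromRows_mul, fromBlocks_mul_fromRows, Matrix.one_mul, Matrix.zero_mul,
      Matrix.mul_one, Matrix.neg_mul, add_zero, zero_add, sub_eq_add_neg]
  have hU := h.conjTranspose_mul_mul_same (fromRows_one_mulVec_injective K)
  rw [conjTranspose_eq_transpose_of_trivial] at hU
  convert hU using 1
  rw [← transpose_fromRows_one_mul_swap_mul, ← transpose_fromRows_mul_fromBlocks_mul_fromRows,
    ← hTU, Matrix.transpose_mul]
  simp only [Matrix.mul_assoc]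
  rfl

theorem stmt5_general {n p q r : ℕ}
    (A : Matrix (Fin n) (Fin n) ℝ) (B₁ : Matrix (Fin n) (Fin p) ℝ)
    (B₃ : Matrix (Fin n) (Fin r) ℝ) (C₁ : Matrix (Fin q) (Fin n) ℝ)
    (D₁₁ : Matrix (Fin q) (Fin p) ℝ) (D₁₃ : Matrix (Fin q) (Fin r) ℝ)
    (Y : Matrix (Fin n) (Fin n) ℝ)
    (M : Matrix (Fin r) (Fin n) ℝ)
    (P : Matrix (Fin q ⊕ Fin p) (Fin q ⊕ Fin p) ℝ)
    (hlmi : LMI1b A B₁ B₃ C₁ D₁₁ D₁₃ Y M P)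
    (Δ : Matrix (Fin p) (Fin q) ℝ) (hwp : IsUnit (1 - D₁₁ * Δ))
    (hneg : (-((fromRows (-Δᵀ) (1 : Matrix (Fin p) (Fin p) ℝ))ᵀ * P *
        fromRows (-Δᵀ) (1 : Matrix (Fin p) (Fin p) ℝ))).PosDef)
    (W : Matrix (Fin p) (Fin q) ℝ) (hW : W = Δ * (1 - D₁₁ * Δ)⁻¹) :
    (-(((A * Y + B₃ * M) + B₁ * W * (C₁ * Y + D₁₃ * M)) +
        ((A * Y + B₃ * M) + B₁ * W * (C₁ * Y + D₁₃ * M))ᵀ)).PosDef := by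
  set N := (A * Y + B₃ * M) + B₁ * W * (C₁ * Y + D₁₃ * M)
  set F := fromRows (-Δᵀ) (1 : Matrix (Fin p) (Fin p) ℝ)
  set K := Wᵀ * B₁ᵀ
  set E := -B₁ᵀ - D₁₁ᵀ * K
  have hloop : Wᵀ = Δᵀ + Δᵀ * D₁₁ᵀ * Wᵀ := by
    have h := congrArg transpose (mul_nonsing_inv_one_sub_mul_eq Δ D₁₁ hwp)
    rw [← hW] at h
    simpa only [Matrix.transpose_add, Matrix.transpose_mul, Matrix.mul_assoc] using h
  have hX : -(A * Y + B₃ * M)ᵀ - (C₁ * Y + D₁₃ * M)ᵀ * K = -Nᵀ := by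
    simp only [N, K, Matrix.transpose_add, Matrix.transpose_mul, Matrix.mul_assoc]
    abel
  have hZ : fromRows K E = F * E := by
    have hK : K = -Δᵀ * E := calc
      K = (Δᵀ + Δᵀ * D₁₁ᵀ * Wᵀ) * B₁ᵀ := by rw [← hloop]
      _ = -Δᵀ * E := by
        simp only [E, K, Matrix.neg_mul, Matrix.mul_sub, Matrix.mul_neg, Matrix.add_mul,
          Matrix.mul_assoc]
        abel
    rw [fromRows_mul, Matrix.one_mul, ← hK]
  have hlmiK := hlmi.posDef_congr_fromRows_one K
  rw [hX, hZ] at hlmiK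
  have hmult := hneg.posSemidef.conjTranspose_mul_mul_same E
  rw [conjTranspose_eq_transpose_of_trivial] at hmult
  have hsplit : -(N + Nᵀ) = (-Nᵀ + (-Nᵀ)ᵀ + (F * E)ᵀ * P * (F * E)) +
      Eᵀ * -(Fᵀ * P * F) * E := by
    simp only [Matrix.transpose_mul, Matrix.transpose_neg, Matrix.transpose_transpose,
      Matrix.mul_neg, Matrix.neg_mul, Matrix.mul_assoc]
    abel
  rw [hsplit]
  exact hlmiK.add_posSemidef hmult

/-- multiplier elimination step yielding the closed-loop Lyapunov
inequality in the proof of Theorem 1. -/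
theorem stmt5 {n p q r : ℕ}
    (A : Matrix (Fin n) (Fin n) ℝ) (B₁ : Matrix (Fin n) (Fin p) ℝ)
    (B₃ : Matrix (Fin n) (Fin r) ℝ) (C₁ : Matrix (Fin q) (Fin n) ℝ)
    (D₁₁ : Matrix (Fin q) (Fin p) ℝ) (D₁₃ : Matrix (Fin q) (Fin r) ℝ)
    (Y : Matrix (Fin n) (Fin n) ℝ) (hYsymm : Y.IsSymm)
    (M : Matrix (Fin r) (Fin n) ℝ)
    (P : Matrix (Fin q ⊕ Fin p) (Fin q ⊕ Fin p) ℝ) (hPsymm : P.IsSymm)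
    (hlmi : LMI1b A B₁ B₃ C₁ D₁₁ D₁₃ Y M P)
    (Δ : Matrix (Fin p) (Fin q) ℝ) (hwp : IsUnit (1 - D₁₁ * Δ))
    (hneg : (-((fromRows (-Δᵀ) (1 : Matrix (Fin p) (Fin p) ℝ))ᵀ * P *
        fromRows (-Δᵀ) (1 : Matrix (Fin p) (Fin p) ℝ))).PosDef)
    (W : Matrix (Fin p) (Fin q) ℝ) (hW : W = Δ * (1 - D₁₁ * Δ)⁻¹) :
    (-(((A * Y + B₃ * M) + B₁ * W * (C₁ * Y + D₁₃ * M)) +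
        ((A * Y + B₃ * M) + B₁ * W * (C₁ * Y + D₁₃ * M))ᵀ)).PosDef :=
  stmt5_general A B₁ B₃ C₁ D₁₁ D₁₃ Y M P hlmi Δ hwp hneg W hW

end
end

section
/- Suppose Y is a real symmetric n×n matrix, M is a real r×n matrix, γ > 0, and P_k is a real symmetric (q+p)×(q+p) matrix for which LMI (1c) holds. Let Δ be a real p×q matrix such that I_q − D₁₁Δ is invertible and such that [−Δᵀ; I_p]ᵀ P_k [−Δᵀ; I_p] is negative definite. Then, with W := Δ(I_q − D₁₁Δ)⁻¹, 𝒜 := Ā + B₁WC̄₁, ℬ := B₂ + B₁WD₁₂, 𝒞 := C̄₂ + D₂₁WC̄₁ and 𝒟 := D₂₂ + D₂₁WD₁₂, the symmetric block matrix [[𝒜 + 𝒜ᵀ, 𝒞ᵀ, ℬ],[𝒞, −γ²I_l, 𝒟],[ℬᵀ, 𝒟ᵀ, −I_m]] is negative definite (the multiplier elimination step yielding the closed-loop dual H∞ inequality in the proof of Theorem 1). -/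
/-! Substituting the multiplier channel `b = Wᵀ (B₁ᵀ x + D₂₁ᵀ z)` into LMI (1c), i.e. conjugating
it with an injective matrix `E`, makes the `P_k`-block equal to `[−Δᵀ; I]ᵀ P_k [−Δᵀ; I]`
evaluated at `t = −(I + D₁₁ᵀ Wᵀ)(B₁ᵀ x + D₂₁ᵀ z)`, because `Wᵀ = Δᵀ (I + D₁₁ᵀ Wᵀ)`. That term is
`≤ 0` by the multiplier condition, so dropping it keeps the inequality strict, and what remains
is exactly the Schur complement of the `−I_m` block of the closed-loop H∞ matrix. -/

open Matrix

noncomputable section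

/-- LMI (1c): `T′ᵀ · blkdiag([[0, I],[I, 0]], P_k, [[γ²I, 0],[0, −I]]) · T′ ≻ 0` with the
block rows `[I,0,0]`, `[−Āᵀ,−C̄₁ᵀ,−C̄₂ᵀ]`, `[0,I,0]`, `[−B₁ᵀ,−D₁₁ᵀ,−D₂₁ᵀ]`, `[0,0,I]`,
`[−B₂ᵀ,−D₁₂ᵀ,−D₂₂ᵀ]` of `T′`. -/
def LMI1c {n p q m l r : ℕ} (A : Matrix (Fin n) (Fin n) ℝ) (B₁ : Matrix (Fin n) (Fin p) ℝ)
    (B₂ : Matrix (Fin n) (Fin m) ℝ) (B₃ : Matrix (Fin n) (Fin r) ℝ)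
    (C₁ : Matrix (Fin q) (Fin n) ℝ) (C₂ : Matrix (Fin l) (Fin n) ℝ)
    (D₁₁ : Matrix (Fin q) (Fin p) ℝ) (D₁₂ : Matrix (Fin q) (Fin m) ℝ)
    (D₁₃ : Matrix (Fin q) (Fin r) ℝ) (D₂₁ : Matrix (Fin l) (Fin p) ℝ)
    (D₂₂ : Matrix (Fin l) (Fin m) ℝ) (D₂₃ : Matrix (Fin l) (Fin r) ℝ)
    (Y : Matrix (Fin n) (Fin n) ℝ) (M : Matrix (Fin r) (Fin n) ℝ)
    (Pk : Matrix (Fin q ⊕ Fin p) (Fin q ⊕ Fin p) ℝ) (γ : ℝ) : Prop :=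
  let Ab := A * Y + B₃ * M
  let Cb₁ := C₁ * Y + D₁₃ * M
  let Cb₂ := C₂ * Y + D₂₃ * M
  let T' : Matrix (((Fin n ⊕ Fin n) ⊕ (Fin q ⊕ Fin p)) ⊕ (Fin l ⊕ Fin m))
      ((Fin n ⊕ Fin q) ⊕ Fin l) ℝ :=
    fromRows
      (fromRows
        (fromBlocks (fromCols 1 0) 0 (fromCols (-Abᵀ) (-Cb₁ᵀ)) (-Cb₂ᵀ))
        (fromBlocks (fromCols 0 1) 0 (fromCols (-B₁ᵀ) (-D₁₁ᵀ)) (-D₂₁ᵀ)))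
      (fromBlocks (fromCols 0 0) 1 (fromCols (-B₂ᵀ) (-D₁₂ᵀ)) (-D₂₂ᵀ))
  let Mid : Matrix (((Fin n ⊕ Fin n) ⊕ (Fin q ⊕ Fin p)) ⊕ (Fin l ⊕ Fin m))
      (((Fin n ⊕ Fin n) ⊕ (Fin q ⊕ Fin p)) ⊕ (Fin l ⊕ Fin m)) ℝ :=
    fromBlocks (fromBlocks (fromBlocks 0 1 1 0) 0 0 Pk) 0 0
      (fromBlocks ((γ ^ 2) • (1 : Matrix (Fin l) (Fin l) ℝ)) 0 0 (-1))
  (T'ᵀ * Mid * T').PosDef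

namespace Matrix

variable {R : Type*} {m m₁ m₂ n n₁ n₂ : Type*}

lemma fromCols_add [Add R] (A₁ B₁ : Matrix m n₁ R) (A₂ B₂ : Matrix m n₂ R) :
    fromCols A₁ A₂ + fromCols B₁ B₂ = fromCols (A₁ + B₁) (A₂ + B₂) := by
  ext _ (_ | _) <;> rfl

lemma transpose_fromRows_mul_fromBlocks_mul_fromRows_s8 [Semiring R] [Fintype m₁] [Fintype m₂]
    (A₁ : Matrix m₁ n R) (A₂ : Matrix m₂ n R) (P₁₁ : Matrix m₁ m₁ R) (P₁₂ : Matrix m₁ m₂ R)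
    (P₂₁ : Matrix m₂ m₁ R) (P₂₂ : Matrix m₂ m₂ R) :
    (fromRows A₁ A₂)ᵀ * fromBlocks P₁₁ P₁₂ P₂₁ P₂₂ * fromRows A₁ A₂ =
      A₁ᵀ * P₁₁ * A₁ + A₁ᵀ * P₁₂ * A₂ + A₂ᵀ * P₂₁ * A₁ + A₂ᵀ * P₂₂ * A₂ := by
  simp only [transpose_fromRows, fromCols_mul_fromBlocks, fromCols_mul_fromRows, Matrix.add_mul]
  abel

theorem posDef_fromBlocks₂₂_of_schur [CommRing R] [PartialOrder R] [StarRing R]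
    [StarOrderedRing R] [Fintype m] [Fintype n] [DecidableEq n]
    {A : Matrix m m R} {B : Matrix m n R} {D : Matrix n n R} (hD : D.PosDef) [Invertible D]
    (hS : (A - B * D⁻¹ * Bᴴ).PosDef) : (fromBlocks A B Bᴴ D).PosDef := by
  refine .of_dotProduct_mulVec_pos ((IsHermitian.fromBlocks₂₂ A B hD.1).mpr hS.1) fun v hv => ?_
  rw [← Sum.elim_comp_inl_inr v, dotProduct_mulVec, schur_complement_eq₂₂ A B _ _ hD.1]
  simp only [← dotProduct_mulVec]
  by_cases hx : v ∘ Sum.inl = 0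
  · have hy : v ∘ Sum.inr ≠ 0 := fun hy =>
      hv (by ext (i | i); exacts [congrFun hx i, congrFun hy i])
    simpa [hx] using hD.dotProduct_mulVec_pos hy
  · exact add_pos_of_nonneg_of_pos (hD.posSemidef.dotProduct_mulVec_nonneg _)
      (hS.dotProduct_mulVec_pos hx)

lemma mul_inv_one_sub_mul_eq_add [CommRing R] [Fintype m] [Fintype n] [DecidableEq m]
    {Δ : Matrix n m R} {D : Matrix m n R} (h : IsUnit (1 - D * Δ)) :
    Δ * (1 - D * Δ)⁻¹ = Δ + Δ * (1 - D * Δ)⁻¹ * D * Δ := by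
  have hinv : Δ * (1 - D * Δ)⁻¹ * (1 - D * Δ) = Δ :=
    nonsing_inv_mul_cancel_right _ _ ((isUnit_iff_isUnit_det _).mp h)
  rw [Matrix.mul_sub, Matrix.mul_one, ← Matrix.mul_assoc] at hinv
  exact sub_eq_iff_eq_add.mp hinv

end Matrix

section LMI

variable {R : Type*} [CommRing R] {n q p l m : Type*}
  [Fintype n] [Fintype p] [Fintype l] [DecidableEq n] [DecidableEq l]

/-- The matrix `T′` of LMI (1c), with `Ā`, `C̄₁`, `C̄₂` as parameters. -/
def lmiOuterFactor [DecidableEq q] [DecidableEq m] (Ab : Matrix n n R) (Cb₁ : Matrix q n R)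
    (Cb₂ : Matrix l n R) (B₁ : Matrix n p R) (B₂ : Matrix n m R) (D₁₁ : Matrix q p R)
    (D₁₂ : Matrix q m R) (D₂₁ : Matrix l p R) (D₂₂ : Matrix l m R) :
    Matrix (((n ⊕ n) ⊕ (q ⊕ p)) ⊕ (l ⊕ m)) ((n ⊕ q) ⊕ l) R :=
  fromRows
    (fromRows
      (fromBlocks (fromCols 1 0) 0 (fromCols (-Abᵀ) (-Cb₁ᵀ)) (-Cb₂ᵀ))
      (fromBlocks (fromCols 0 1) 0 (fromCols (-B₁ᵀ) (-D₁₁ᵀ)) (-D₂₁ᵀ)))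
    (fromBlocks (fromCols 0 0) 1 (fromCols (-B₂ᵀ) (-D₁₂ᵀ)) (-D₂₂ᵀ))

variable (n l m) in
def lmiMultiplier [DecidableEq m] (Pk : Matrix (q ⊕ p) (q ⊕ p) R) (γ : R) :
    Matrix (((n ⊕ n) ⊕ (q ⊕ p)) ⊕ (l ⊕ m)) (((n ⊕ n) ⊕ (q ⊕ p)) ⊕ (l ⊕ m)) R :=
  fromBlocks (fromBlocks (fromBlocks 0 1 1 0) 0 0 Pk) 0 0
    (fromBlocks ((γ ^ 2) • (1 : Matrix l l R)) 0 0 (-1))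

def lmiEliminator (W : Matrix p q R) (B₁ : Matrix n p R) (D₂₁ : Matrix l p R) :
    Matrix ((n ⊕ q) ⊕ l) (n ⊕ l) R :=
  fromRows (fromRows (fromCols 1 0) (Wᵀ * fromCols B₁ᵀ D₂₁ᵀ)) (fromCols 0 1)

lemma lmiEliminator_mulVec_injective (W : Matrix p q R) (B₁ : Matrix n p R)
    (D₂₁ : Matrix l p R) : Function.Injective (lmiEliminator W B₁ D₂₁).mulVec := by
  intro v w hvw
  ext (i | i)
  · simpa [lmiEliminator, fromRows_mulVec, fromBlocks_mulVec] using
      congrFun hvw (Sum.inl (Sum.inl i))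
  · simpa [lmiEliminator, fromRows_mulVec] using congrFun hvw (Sum.inr i)

lemma lmiOuterFactor_mul_lmiEliminator [Fintype q] [DecidableEq q] [DecidableEq p]
    [DecidableEq m]
    (Ab : Matrix n n R) (Cb₁ : Matrix q n R) (Cb₂ : Matrix l n R) (B₁ : Matrix n p R)
    (B₂ : Matrix n m R) (D₁₁ : Matrix q p R) (D₁₂ : Matrix q m R) (D₂₁ : Matrix l p R)
    (D₂₂ : Matrix l m R) {Δ W : Matrix p q R} (hW : W = Δ + W * D₁₁ * Δ) :
    lmiOuterFactor Ab Cb₁ Cb₂ B₁ B₂ D₁₁ D₁₂ D₂₁ D₂₂ * lmiEliminator W B₁ D₂₁ =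
      fromRows
        (fromRows
          (fromRows (fromCols 1 0) (-fromCols (Ab + B₁ * W * Cb₁)ᵀ (Cb₂ + D₂₁ * W * Cb₁)ᵀ))
          (fromRows (-Δᵀ) 1 * -(fromCols B₁ᵀ D₂₁ᵀ + D₁₁ᵀ * Wᵀ * fromCols B₁ᵀ D₂₁ᵀ)))
        (fromRows (fromCols 0 1) (-fromCols (B₂ + B₁ * W * D₁₂)ᵀ (D₂₂ + D₂₁ * W * D₁₂)ᵀ)) := by
  have hWt : Wᵀ = Δᵀ + Δᵀ * D₁₁ᵀ * Wᵀ := by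
    conv_lhs => rw [hW]
    simp only [transpose_add, transpose_mul, Matrix.mul_assoc]
  simp only [lmiOuterFactor, lmiEliminator, fromRows_mul, fromBlocks_mul_fromRows,
    fromCols_mul_fromRows, mul_fromCols, Matrix.mul_one, Matrix.one_mul, Matrix.mul_zero,
    Matrix.zero_mul, add_zero, zero_add, fromCols_add, Matrix.neg_mul]
  refine congrArg₂ fromRows (congrArg₂ fromRows ?_ (congrArg₂ fromRows ?_ ?_)) ?_
  · congr 1
    simp only [fromCols_neg, fromCols_add, transpose_add, transpose_mul, Matrix.mul_assoc]
    congr 1 <;> abel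
  · conv_lhs => rw [hWt]
    simp only [fromCols_neg, Matrix.mul_neg, neg_neg, mul_fromCols, Matrix.mul_add,
      Matrix.add_mul, Matrix.mul_assoc]
  · simp only [fromCols_neg, fromCols_add, Matrix.mul_assoc]
    congr 1 <;> abel
  · congr 1
    simp only [fromCols_neg, fromCols_add, transpose_add, transpose_mul, Matrix.mul_assoc]
    congr 1 <;> abel

lemma transpose_mul_lmiMultiplier_mul [Fintype q] [Fintype m] [DecidableEq m]
    (𝒜 : Matrix n n R) (ℬ : Matrix n m R) (𝒞 : Matrix l n R) (𝒟 : Matrix l m R)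
    (F : Matrix (q ⊕ p) p R) (G : Matrix p (n ⊕ l) R) (Pk : Matrix (q ⊕ p) (q ⊕ p) R) (γ : R) :
    (fromRows
        (fromRows (fromRows (fromCols (1 : Matrix n n R) (0 : Matrix n l R)) (-fromCols 𝒜ᵀ 𝒞ᵀ))
          (F * G))
        (fromRows (fromCols (0 : Matrix l n R) (1 : Matrix l l R)) (-fromCols ℬᵀ 𝒟ᵀ)))ᵀ *
        lmiMultiplier n l m Pk γ *
      fromRows
        (fromRows (fromRows (fromCols (1 : Matrix n n R) (0 : Matrix n l R)) (-fromCols 𝒜ᵀ 𝒞ᵀ))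
          (F * G))
        (fromRows (fromCols (0 : Matrix l n R) (1 : Matrix l l R)) (-fromCols ℬᵀ 𝒟ᵀ)) =
      -fromBlocks (𝒜 + 𝒜ᵀ) 𝒞ᵀ 𝒞 (-(γ ^ 2 • 1)) - fromRows ℬ 𝒟 * fromCols ℬᵀ 𝒟ᵀ +
        Gᵀ * (Fᵀ * Pk * F) * G := by
  simp only [lmiMultiplier, transpose_fromRows_mul_fromBlocks_mul_fromRows_s8, transpose_fromCols,
    transpose_neg, transpose_mul, transpose_one, transpose_zero, transpose_transpose,
    fromRows_mul_fromCols, Matrix.mul_zero, Matrix.zero_mul, Matrix.mul_one, Matrix.neg_mul,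
    Matrix.mul_neg, neg_zero, neg_neg, add_zero, zero_add]
  simp only [Matrix.mul_smul, Matrix.mul_one, Matrix.one_mul, Matrix.smul_mul,
    fromRows_mul_fromCols, Matrix.mul_zero, smul_zero, fromBlocks_smul, fromBlocks_neg,
    fromBlocks_add, sub_eq_add_neg, Matrix.mul_assoc]
  rw [add_right_comm, fromBlocks_add]
  congr 2 <;> abel

end LMI

theorem posDef_closedLoop_schur_of_LMI1c {n p q m l r : ℕ}
    (A : Matrix (Fin n) (Fin n) ℝ) (B₁ : Matrix (Fin n) (Fin p) ℝ)
    (B₂ : Matrix (Fin n) (Fin m) ℝ) (B₃ : Matrix (Fin n) (Fin r) ℝ)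
    (C₁ : Matrix (Fin q) (Fin n) ℝ) (C₂ : Matrix (Fin l) (Fin n) ℝ)
    (D₁₁ : Matrix (Fin q) (Fin p) ℝ) (D₁₂ : Matrix (Fin q) (Fin m) ℝ)
    (D₁₃ : Matrix (Fin q) (Fin r) ℝ) (D₂₁ : Matrix (Fin l) (Fin p) ℝ)
    (D₂₂ : Matrix (Fin l) (Fin m) ℝ) (D₂₃ : Matrix (Fin l) (Fin r) ℝ)
    (Y : Matrix (Fin n) (Fin n) ℝ) (M : Matrix (Fin r) (Fin n) ℝ) (γ : ℝ)
    (Pk : Matrix (Fin q ⊕ Fin p) (Fin q ⊕ Fin p) ℝ)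
    (hlmi : LMI1c A B₁ B₂ B₃ C₁ C₂ D₁₁ D₁₂ D₁₃ D₂₁ D₂₂ D₂₃ Y M Pk γ)
    {Δ W : Matrix (Fin p) (Fin q) ℝ}
    (hneg : (-((fromRows (-Δᵀ) (1 : Matrix (Fin p) (Fin p) ℝ))ᵀ * Pk *
        fromRows (-Δᵀ) (1 : Matrix (Fin p) (Fin p) ℝ))).PosDef)
    (hW : W = Δ + W * D₁₁ * Δ) :
    let 𝒜 := (A * Y + B₃ * M) + B₁ * W * (C₁ * Y + D₁₃ * M)
    let ℬ := B₂ + B₁ * W * D₁₂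
    let 𝒞 := (C₂ * Y + D₂₃ * M) + D₂₁ * W * (C₁ * Y + D₁₃ * M)
    let 𝒟 := D₂₂ + D₂₁ * W * D₁₂
    (-fromBlocks (𝒜 + 𝒜ᵀ) 𝒞ᵀ 𝒞 (-(γ ^ 2 • 1)) - fromRows ℬ 𝒟 * fromCols ℬᵀ 𝒟ᵀ).PosDef := by
  intro 𝒜 ℬ 𝒞 𝒟
  set T := lmiOuterFactor (A * Y + B₃ * M) (C₁ * Y + D₁₃ * M) (C₂ * Y + D₂₃ * M)
    B₁ B₂ D₁₁ D₁₂ D₂₁ D₂₂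
  set E := lmiEliminator W B₁ D₂₁
  have hlmi' : (Tᵀ * lmiMultiplier (Fin n) (Fin l) (Fin m) Pk γ * T).PosDef := hlmi
  have hconj : ((T * E)ᵀ * lmiMultiplier (Fin n) (Fin l) (Fin m) Pk γ * (T * E)).PosDef := by
    simpa only [conjTranspose_eq_transpose_of_trivial, transpose_mul, Matrix.mul_assoc] using
      hlmi'.conjTranspose_mul_mul_same (lmiEliminator_mulVec_injective W B₁ D₂₁)
  rw [lmiOuterFactor_mul_lmiEliminator _ _ _ _ _ _ _ _ _ hW, transpose_mul_lmiMultiplier_mul]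
    at hconj
  set F := fromRows (-Δᵀ) (1 : Matrix (Fin p) (Fin p) ℝ)
  set G := -(fromCols B₁ᵀ D₂₁ᵀ + D₁₁ᵀ * Wᵀ * fromCols B₁ᵀ D₂₁ᵀ)
  have hmult : (Gᵀ * -(Fᵀ * Pk * F) * G).PosSemidef := by
    simpa only [conjTranspose_eq_transpose_of_trivial] using
      hneg.posSemidef.conjTranspose_mul_mul_same G
  have hsum := hconj.add_posSemidef hmult
  rwa [Matrix.mul_neg Gᵀ, Matrix.neg_mul _ G, add_neg_cancel_right] at hsum

theorem stmt8_general {n p q m l r : ℕ}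
    (A : Matrix (Fin n) (Fin n) ℝ) (B₁ : Matrix (Fin n) (Fin p) ℝ)
    (B₂ : Matrix (Fin n) (Fin m) ℝ) (B₃ : Matrix (Fin n) (Fin r) ℝ)
    (C₁ : Matrix (Fin q) (Fin n) ℝ) (C₂ : Matrix (Fin l) (Fin n) ℝ)
    (D₁₁ : Matrix (Fin q) (Fin p) ℝ) (D₁₂ : Matrix (Fin q) (Fin m) ℝ)
    (D₁₃ : Matrix (Fin q) (Fin r) ℝ) (D₂₁ : Matrix (Fin l) (Fin p) ℝ)
    (D₂₂ : Matrix (Fin l) (Fin m) ℝ) (D₂₃ : Matrix (Fin l) (Fin r) ℝ)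
    (Y : Matrix (Fin n) (Fin n) ℝ)
    (M : Matrix (Fin r) (Fin n) ℝ) (γ : ℝ)
    (Pk : Matrix (Fin q ⊕ Fin p) (Fin q ⊕ Fin p) ℝ)
    (hlmi : LMI1c A B₁ B₂ B₃ C₁ C₂ D₁₁ D₁₂ D₁₃ D₂₁ D₂₂ D₂₃ Y M Pk γ)
    (Δ : Matrix (Fin p) (Fin q) ℝ) (hwp : IsUnit (1 - D₁₁ * Δ))
    (hneg : (-((fromRows (-Δᵀ) (1 : Matrix (Fin p) (Fin p) ℝ))ᵀ * Pk *
        fromRows (-Δᵀ) (1 : Matrix (Fin p) (Fin p) ℝ))).PosDef)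
    (W : Matrix (Fin p) (Fin q) ℝ) (hW : W = Δ * (1 - D₁₁ * Δ)⁻¹)
    (𝒜 : Matrix (Fin n) (Fin n) ℝ)
    (h𝒜 : 𝒜 = (A * Y + B₃ * M) + B₁ * W * (C₁ * Y + D₁₃ * M))
    (ℬ : Matrix (Fin n) (Fin m) ℝ) (hℬ : ℬ = B₂ + B₁ * W * D₁₂)
    (𝒞 : Matrix (Fin l) (Fin n) ℝ)
    (h𝒞 : 𝒞 = (C₂ * Y + D₂₃ * M) + D₂₁ * W * (C₁ * Y + D₁₃ * M))
    (𝒟 : Matrix (Fin l) (Fin m) ℝ) (h𝒟 : 𝒟 = D₂₂ + D₂₁ * W * D₁₂) :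
    (-(fromBlocks
        (fromBlocks (𝒜 + 𝒜ᵀ) (𝒞ᵀ) 𝒞 (-((γ ^ 2) • (1 : Matrix (Fin l) (Fin l) ℝ))))
        (fromRows ℬ 𝒟) (fromCols ℬᵀ 𝒟ᵀ)
        (-(1 : Matrix (Fin m) (Fin m) ℝ)))).PosDef := by
  have hW' : W = Δ + W * D₁₁ * Δ := hW ▸ mul_inv_one_sub_mul_eq_add hwp
  have hschur := posDef_closedLoop_schur_of_LMI1c A B₁ B₂ B₃ C₁ C₂ D₁₁ D₁₂ D₁₃ D₂₁ D₂₂ D₂₃ Y M γ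
    Pk hlmi hneg hW'
  rw [← h𝒜, ← hℬ, ← h𝒞, ← h𝒟] at hschur
  rw [fromBlocks_neg, neg_neg, show -fromCols ℬᵀ 𝒟ᵀ = (-fromRows ℬ 𝒟)ᴴ by
    rw [conjTranspose_eq_transpose_of_trivial, transpose_neg, transpose_fromRows]]
  have : Invertible (1 : Matrix (Fin m) (Fin m) ℝ) := invertibleOne
  refine posDef_fromBlocks₂₂_of_schur PosDef.one ?_
  simpa only [inv_one, Matrix.mul_one, Matrix.neg_mul, Matrix.mul_neg, neg_neg,
    conjTranspose_eq_transpose_of_trivial, transpose_neg, transpose_fromRows] using hschur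

/-- multiplier elimination step yielding the closed-loop dual H∞
inequality in the proof of Theorem 1. -/
theorem stmt8 {n p q m l r : ℕ}
    (A : Matrix (Fin n) (Fin n) ℝ) (B₁ : Matrix (Fin n) (Fin p) ℝ)
    (B₂ : Matrix (Fin n) (Fin m) ℝ) (B₃ : Matrix (Fin n) (Fin r) ℝ)
    (C₁ : Matrix (Fin q) (Fin n) ℝ) (C₂ : Matrix (Fin l) (Fin n) ℝ)
    (D₁₁ : Matrix (Fin q) (Fin p) ℝ) (D₁₂ : Matrix (Fin q) (Fin m) ℝ)
    (D₁₃ : Matrix (Fin q) (Fin r) ℝ) (D₂₁ : Matrix (Fin l) (Fin p) ℝ)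
    (D₂₂ : Matrix (Fin l) (Fin m) ℝ) (D₂₃ : Matrix (Fin l) (Fin r) ℝ)
    (Y : Matrix (Fin n) (Fin n) ℝ) (hYsymm : Y.IsSymm)
    (M : Matrix (Fin r) (Fin n) ℝ) (γ : ℝ) (hγ : 0 < γ)
    (Pk : Matrix (Fin q ⊕ Fin p) (Fin q ⊕ Fin p) ℝ) (hPksymm : Pk.IsSymm)
    (hlmi : LMI1c A B₁ B₂ B₃ C₁ C₂ D₁₁ D₁₂ D₁₃ D₂₁ D₂₂ D₂₃ Y M Pk γ)
    (Δ : Matrix (Fin p) (Fin q) ℝ) (hwp : IsUnit (1 - D₁₁ * Δ))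
    (hneg : (-((fromRows (-Δᵀ) (1 : Matrix (Fin p) (Fin p) ℝ))ᵀ * Pk *
        fromRows (-Δᵀ) (1 : Matrix (Fin p) (Fin p) ℝ))).PosDef)
    (W : Matrix (Fin p) (Fin q) ℝ) (hW : W = Δ * (1 - D₁₁ * Δ)⁻¹)
    (𝒜 : Matrix (Fin n) (Fin n) ℝ)
    (h𝒜 : 𝒜 = (A * Y + B₃ * M) + B₁ * W * (C₁ * Y + D₁₃ * M))
    (ℬ : Matrix (Fin n) (Fin m) ℝ) (hℬ : ℬ = B₂ + B₁ * W * D₁₂)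
    (𝒞 : Matrix (Fin l) (Fin n) ℝ)
    (h𝒞 : 𝒞 = (C₂ * Y + D₂₃ * M) + D₂₁ * W * (C₁ * Y + D₁₃ * M))
    (𝒟 : Matrix (Fin l) (Fin m) ℝ) (h𝒟 : 𝒟 = D₂₂ + D₂₁ * W * D₁₂) :
    (-(fromBlocks
        (fromBlocks (𝒜 + 𝒜ᵀ) (𝒞ᵀ) 𝒞 (-((γ ^ 2) • (1 : Matrix (Fin l) (Fin l) ℝ))))
        (fromRows ℬ 𝒟) (fromCols ℬᵀ 𝒟ᵀ)
        (-(1 : Matrix (Fin m) (Fin m) ℝ)))).PosDef :=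
  stmt8_general A B₁ B₂ B₃ C₁ C₂ D₁₁ D₁₂ D₁₃ D₂₁ D₂₂ D₂₃ Y M γ Pk hlmi Δ hwp hneg W hW 𝒜 h𝒜 ℬ hℬ 𝒞
    h𝒞 𝒟 h𝒟
end
end

section
/- Let γ > 0 and let 𝒜 (n×n), ℬ (n×m), 𝒞 (l×n), 𝒟 (l×m) be real matrices. Suppose there exists a real symmetric positive definite n×n matrix X such that the symmetric block matrix [[𝒜ᵀX + X𝒜, Xℬ, 𝒞ᵀ],[ℬᵀX, −γ²I_m, 𝒟ᵀ],[𝒞, 𝒟, −I_l]] is negative definite. Then 𝒜 is Hurwitz and sup over ω ∈ ℝ of ‖𝒞(iωI − 𝒜)⁻¹ℬ + 𝒟‖ is strictly smaller than γ (primal bounded real lemma with H∞ performance bound, used in the robust control toolchain of the paper). -/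
/-!
Take `V(x) = x* X x` as storage function. For complex `x, v` and `y = C x + D v`, the quadratic
form of the LMI matrix at `(x, v, y)` is `2 Re ⟪A x + B v, X x⟫ + ‖y‖² - γ²‖v‖²`, and strictness of
the LMI bounds it by `-ε ‖(x, v, y)‖²` for some `ε > 0`. At an eigenvector (`v = 0`, `A x = μ x`)
the first term is `2 Re μ · x* X x`, which forces `Re μ < 0`. When `A x + B v = iω x` it vanishes,
and `x = (iω - A)⁻¹ B v` gives `‖G(iω) v‖² ≤ (γ² - ε) ‖v‖²` uniformly in `ω`.
-/

open Matrix

noncomputable section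

/-- The ℓ²-operator (spectral) norm of a complex matrix. -/
def specNorm {l m : ℕ} (G : Matrix (Fin l) (Fin m) ℂ) : ℝ :=
  ‖LinearMap.toContinuousLinearMap (Matrix.toEuclideanLin G)‖

/-- Frequency response `C (iωI − A)⁻¹ B + D` of a real state-space system. -/
def freqResp {n l m : ℕ} (Acl : Matrix (Fin n) (Fin n) ℝ) (Bcl : Matrix (Fin n) (Fin m) ℝ)
    (Ccl : Matrix (Fin l) (Fin n) ℝ) (Dcl : Matrix (Fin l) (Fin m) ℝ) (ω : ℝ) :
    Matrix (Fin l) (Fin m) ℂ :=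
  (Ccl.map Complex.ofReal) *
    ((Complex.I * (ω : ℂ)) • (1 : Matrix (Fin n) (Fin n) ℂ) - Acl.map Complex.ofReal)⁻¹ *
    (Bcl.map Complex.ofReal) + Dcl.map Complex.ofReal

open Complex (ofReal)
open WithLp (toLp)
open scoped MatrixOrder ComplexOrder

section Complexification

variable {n : Type*} [Fintype n]

lemma norm_toLp_sq_eq_re_star_dotProduct (z : n → ℂ) :
    ‖toLp 2 z‖ ^ 2 = (star z ⬝ᵥ z).re := by
  rw [dotProduct_comm, ← EuclideanSpace.inner_toLp_toLp, ← RCLike.re_to_complex,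
    ← norm_sq_eq_re_inner]

lemma norm_toLp_sumElim_sq {𝕜 : Type*} [RCLike 𝕜] {m : Type*} [Fintype m] (a : n → 𝕜)
    (b : m → 𝕜) : ‖toLp 2 (Sum.elim a b)‖ ^ 2 = ‖toLp 2 a‖ ^ 2 + ‖toLp 2 b‖ ^ 2 := by
  simp [EuclideanSpace.norm_sq_eq, Fintype.sum_sum_type]

lemma Matrix.PosSemidef.map_ofReal {M : Matrix n n ℝ} (hM : M.PosSemidef) :
    (M.map ofReal).PosSemidef := by
  obtain ⟨k, v, rfl⟩ := posSemidef_iff_eq_sum_vecMulVec.mp hM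
  refine posSemidef_iff_eq_sum_vecMulVec.mpr ⟨k, fun i j => v i j, ?_⟩
  ext a b
  simp [Matrix.sum_apply, vecMulVec_apply]

lemma Matrix.PosDef.exists_pos_sub_smul_one_posSemidef [DecidableEq n] {M : Matrix n n ℝ}
    (hM : M.PosDef) : ∃ ε : ℝ, 0 < ε ∧ (M - ε • (1 : Matrix n n ℝ)).PosSemidef := by
  cases isEmpty_or_nonempty n
  · exact ⟨1, one_pos, Subsingleton.elim 0 (M - _) ▸ .zero⟩
  obtain ⟨ε, hε, hle⟩ := (CFC.exists_pos_algebraMap_le_iff hM.isHermitian.isSelfAdjoint).2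
    fun x hx => hM.isStrictlyPositive.spectrum_pos hx
  exact ⟨ε, hε, by rwa [le_iff, Algebra.algebraMap_eq_smul_one] at hle⟩

lemma Matrix.PosDef.exists_pos_mul_norm_sq_le_re_map_ofReal [DecidableEq n]
    {M : Matrix n n ℝ} (hM : M.PosDef) :
    ∃ ε : ℝ, 0 < ε ∧ ∀ z : n → ℂ, ε * ‖toLp 2 z‖ ^ 2 ≤ (star z ⬝ᵥ M.map ofReal *ᵥ z).re := by
  obtain ⟨ε, hε, hM'⟩ := hM.exists_pos_sub_smul_one_posSemidef
  refine ⟨ε, hε, fun z => ?_⟩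
  have hmap : (ε • (1 : Matrix n n ℝ)).map ofReal = (ε : ℂ) • 1 := by
    ext i j; by_cases h : i = j <;> simp [h]
  have := hM'.map_ofReal.re_dotProduct_nonneg z
  rw [norm_toLp_sq_eq_re_star_dotProduct]
  simpa [Matrix.map_sub, sub_mulVec, smul_mulVec, hmap, Complex.re_ofReal_mul] using this

lemma star_dotProduct_transpose_map_ofReal_mulVec {m : Type*} [Fintype m] (A : Matrix n m ℝ)
    (x : m → ℂ) (y : n → ℂ) :
    star x ⬝ᵥ (A.map ofReal)ᵀ *ᵥ y = star (A.map ofReal *ᵥ x) ⬝ᵥ y := by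
  rw [dotProduct_mulVec, star_mulVec]
  congr 2
  ext i j
  simp

end Complexification

section BoundedRealMatrix

variable {R S : Type*} [Ring R] [Ring S]
variable {n m l : Type*} [Fintype n] [DecidableEq m] [DecidableEq l]

def boundedRealMatrix (γ : R) (X A : Matrix n n R) (B : Matrix n m R) (C : Matrix l n R)
    (D : Matrix l m R) : Matrix ((n ⊕ m) ⊕ l) ((n ⊕ m) ⊕ l) R :=
  fromBlocks (fromBlocks (Aᵀ * X + X * A) (X * B) (Bᵀ * X) (-((γ ^ 2) • 1)))
    (fromRows Cᵀ Dᵀ) (fromCols C D) (-1)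

lemma boundedRealMatrix_map (f : R →+* S) (γ : R) (X A : Matrix n n R) (B : Matrix n m R)
    (C : Matrix l n R) (D : Matrix l m R) :
    (boundedRealMatrix γ X A B C D).map f =
      boundedRealMatrix (f γ) (X.map f) (A.map f) (B.map f) (C.map f) (D.map f) := by
  simp [boundedRealMatrix, fromBlocks_map, fromRows_map, fromCols_map, Matrix.map_mul,
    Matrix.map_add, Matrix.map_neg, Matrix.map_one, transpose_map, smul_one_eq_diagonal,
    diagonal_map]

variable [Fintype m] [Fintype l]

lemma star_dotProduct_boundedRealMatrix_mulVec (γ : ℝ) (X A : Matrix n n ℝ) (B : Matrix n m ℝ)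
    (C : Matrix l n ℝ) (D : Matrix l m ℝ) (x : n → ℂ) (v : m → ℂ) :
    let y := C.map ofReal *ᵥ x + D.map ofReal *ᵥ v
    let z := Sum.elim (Sum.elim x v) y
    star z ⬝ᵥ (boundedRealMatrix γ X A B C D).map ofReal *ᵥ z =
      star (A.map ofReal *ᵥ x + B.map ofReal *ᵥ v) ⬝ᵥ X.map ofReal *ᵥ x
        + star x ⬝ᵥ X.map ofReal *ᵥ (A.map ofReal *ᵥ x + B.map ofReal *ᵥ v)
        + star y ⬝ᵥ y - (γ : ℂ) ^ 2 * (star v ⬝ᵥ v) := by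
  intro y z
  have hstar : star z = Sum.elim (Sum.elim (star x) (star v)) (star y) := by
    ext ((i | i) | i) <;> rfl
  have hmap : (boundedRealMatrix γ X A B C D).map ofReal = boundedRealMatrix (γ : ℂ)
      (X.map ofReal) (A.map ofReal) (B.map ofReal) (C.map ofReal) (D.map ofReal) :=
    boundedRealMatrix_map Complex.ofRealHom _ _ _ _ _ _
  rw [hmap]
  simp only [boundedRealMatrix, hstar, z, fromBlocks_mulVec, fromRows_mulVec,
    fromCols_mulVec_sumElim, Sum.elim_comp_inl, Sum.elim_comp_inr, sumElim_dotProduct_sumElim,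
    add_mulVec, ← mulVec_mulVec, neg_mulVec, smul_mulVec, one_mulVec, dotProduct_add,
    dotProduct_neg, dotProduct_smul, star_add, add_dotProduct, smul_eq_mul,
    star_dotProduct_transpose_map_ofReal_mulVec]
  have hCy : star (C.map ofReal *ᵥ x) ⬝ᵥ y + star (D.map ofReal *ᵥ v) ⬝ᵥ y = star y ⬝ᵥ y := by
    rw [← add_dotProduct, ← star_add]
  have hyC : star y ⬝ᵥ C.map ofReal *ᵥ x + star y ⬝ᵥ D.map ofReal *ᵥ v = star y ⬝ᵥ y := by
    rw [← dotProduct_add]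
  simp only [mulVec_add, dotProduct_add]
  linear_combination hCy + hyC

lemma dissipation_le {γ ε : ℝ} {X A : Matrix n n ℝ} {B : Matrix n m ℝ} {C : Matrix l n ℝ}
    {D : Matrix l m ℝ}
    (hε : ∀ z, ε * ‖toLp 2 z‖ ^ 2 ≤
      (star z ⬝ᵥ (-boundedRealMatrix γ X A B C D).map ofReal *ᵥ z).re)
    {s : ℂ} {x : n → ℂ} {v : m → ℂ} (hx : A.map ofReal *ᵥ x + B.map ofReal *ᵥ v = s • x) :
    let y := C.map ofReal *ᵥ x + D.map ofReal *ᵥ v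
    2 * s.re * (star x ⬝ᵥ X.map ofReal *ᵥ x).re + ‖toLp 2 y‖ ^ 2 - γ ^ 2 * ‖toLp 2 v‖ ^ 2 ≤
      -(ε * (‖toLp 2 x‖ ^ 2 + ‖toLp 2 v‖ ^ 2 + ‖toLp 2 y‖ ^ 2)) := by
  intro y
  have hq := star_dotProduct_boundedRealMatrix_mulVec γ X A B C D x v
  have hs : star (s • x) ⬝ᵥ X.map ofReal *ᵥ x + star x ⬝ᵥ X.map ofReal *ᵥ (s • x) =
      ((2 * s.re : ℝ) : ℂ) * (star x ⬝ᵥ X.map ofReal *ᵥ x) := by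
    rw [star_smul, smul_dotProduct, mulVec_smul, dotProduct_smul, ← Complex.add_conj]
    simp only [smul_eq_mul, Complex.star_def]
    ring
  have h := hε (Sum.elim (Sum.elim x v) y)
  rw [Matrix.map_neg _ Complex.ofReal_neg, neg_mulVec, dotProduct_neg, Complex.neg_re, hq, hx,
    hs, norm_toLp_sumElim_sq, norm_toLp_sumElim_sq] at h
  simp only [Complex.add_re, Complex.sub_re, ← Complex.ofReal_pow, Complex.re_ofReal_mul,
    ← norm_toLp_sq_eq_re_star_dotProduct] at h
  linarith

end BoundedRealMatrix

section StateSpace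

variable {n m l : ℕ} {γ ε : ℝ} {X A : Matrix (Fin n) (Fin n) ℝ} {B : Matrix (Fin n) (Fin m) ℝ}
  {C : Matrix (Fin l) (Fin n) ℝ} {D : Matrix (Fin l) (Fin m) ℝ}

lemma isHurwitz_of_boundedRealMatrix (hX : X.PosSemidef) (hε₀ : 0 < ε)
    (hε : ∀ z, ε * ‖toLp 2 z‖ ^ 2 ≤
      (star z ⬝ᵥ (-boundedRealMatrix γ X A B C D).map ofReal *ᵥ z).re) :
    IsHurwitz A := by
  intro μ hμ
  rw [← spectrum_toLin', ← Module.End.hasEigenvalue_iff_mem_spectrum] at hμ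
  obtain ⟨x, hx⟩ := hμ.exists_hasEigenvector
  have hAx : A.map ofReal *ᵥ x + B.map ofReal *ᵥ 0 = μ • x := by
    rw [mulVec_zero, add_zero, ← toLin'_apply, hx.apply_eq_smul]
  have h := dissipation_le hε hAx
  have hq : 0 ≤ (star x ⬝ᵥ X.map ofReal *ᵥ x).re := hX.map_ofReal.re_dotProduct_nonneg x
  have hx₀ : 0 < ‖toLp 2 x‖ := by simpa using hx.2
  simp only [mulVec_zero, add_zero, WithLp.toLp_zero, norm_zero] at h
  by_contra! hμ₀
  nlinarith [mul_nonneg hμ₀ hq, mul_pos hε₀ (pow_pos hx₀ 2)]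

lemma IsHurwitz.isUnit_det_sub (hA : IsHurwitz A) (ω : ℝ) :
    IsUnit ((Complex.I * ω) • (1 : Matrix (Fin n) (Fin n) ℂ) - A.map ofReal).det := by
  rw [← isUnit_iff_isUnit_det, ← Algebra.algebraMap_eq_smul_one]
  by_contra h
  simpa using hA _ (spectrum.mem_iff.2 h)

lemma IsHurwitz.exists_freqResp_mulVec_eq (hA : IsHurwitz A) (ω : ℝ) (v : Fin m → ℂ) :
    ∃ x, A.map ofReal *ᵥ x + B.map ofReal *ᵥ v = (Complex.I * ω) • x ∧
      freqResp A B C D ω *ᵥ v = C.map ofReal *ᵥ x + D.map ofReal *ᵥ v := by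
  set S := (Complex.I * ω) • (1 : Matrix (Fin n) (Fin n) ℂ) - A.map ofReal with hS
  set x := S⁻¹ *ᵥ (B.map ofReal *ᵥ v)
  refine ⟨x, ?_, ?_⟩
  · have hSx : S *ᵥ x = B.map ofReal *ᵥ v := by
      rw [mulVec_mulVec, mul_nonsing_inv _ (hA.isUnit_det_sub ω), one_mulVec]
    rw [← hSx, hS, sub_mulVec, smul_mulVec, one_mulVec]
    abel
  · simp only [freqResp, ← hS, add_mulVec, ← mulVec_mulVec, x]

lemma norm_freqResp_mulVec_sq_le (hA : IsHurwitz A) (hε₀ : 0 ≤ ε)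
    (hε : ∀ z, ε * ‖toLp 2 z‖ ^ 2 ≤
      (star z ⬝ᵥ (-boundedRealMatrix γ X A B C D).map ofReal *ᵥ z).re)
    (ω : ℝ) (v : Fin m → ℂ) :
    ‖toLp 2 (freqResp A B C D ω *ᵥ v)‖ ^ 2 ≤ (γ ^ 2 - ε) * ‖toLp 2 v‖ ^ 2 := by
  obtain ⟨x, hx, hG⟩ := hA.exists_freqResp_mulVec_eq (C := C) (D := D) ω v
  have h := dissipation_le hε hx
  simp only [Complex.mul_re, Complex.I_re, Complex.I_im, Complex.ofReal_re, Complex.ofReal_im,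
    zero_mul, mul_zero, sub_zero, zero_add] at h
  rw [hG]
  nlinarith [mul_nonneg hε₀ (sq_nonneg ‖toLp 2 x‖),
    mul_nonneg hε₀ (sq_nonneg ‖toLp 2 (C.map ofReal *ᵥ x + D.map ofReal *ᵥ v)‖)]

lemma specNorm_le_sqrt {G : Matrix (Fin l) (Fin m) ℂ} {r : ℝ}
    (h : ∀ v, ‖toLp 2 (G *ᵥ v)‖ ^ 2 ≤ r * ‖toLp 2 v‖ ^ 2) : specNorm G ≤ √r := by
  refine ContinuousLinearMap.opNorm_le_bound _ (Real.sqrt_nonneg r) fun v => ?_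
  rw [← Real.sqrt_sq (norm_nonneg _), ← Real.sqrt_sq (norm_nonneg v),
    ← Real.sqrt_mul' _ (sq_nonneg _)]
  exact Real.sqrt_le_sqrt (h v.ofLp)

end StateSpace

/-- primal bounded real lemma with H∞ performance bound. -/
theorem stmt9 {n m l : ℕ} (γ : ℝ) (hγ : 0 < γ)
    (𝒜 : Matrix (Fin n) (Fin n) ℝ) (ℬ : Matrix (Fin n) (Fin m) ℝ)
    (𝒞 : Matrix (Fin l) (Fin n) ℝ) (𝒟 : Matrix (Fin l) (Fin m) ℝ)
    (hX : ∃ X : Matrix (Fin n) (Fin n) ℝ, X.IsSymm ∧ X.PosDef ∧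
      (-(fromBlocks
        (fromBlocks (𝒜ᵀ * X + X * 𝒜) (X * ℬ) (ℬᵀ * X)
          (-((γ ^ 2) • (1 : Matrix (Fin m) (Fin m) ℝ))))
        (fromRows 𝒞ᵀ 𝒟ᵀ) (fromCols 𝒞 𝒟)
        (-(1 : Matrix (Fin l) (Fin l) ℝ)))).PosDef) :
    IsHurwitz 𝒜 ∧ (⨆ ω : ℝ, specNorm (freqResp 𝒜 ℬ 𝒞 𝒟 ω)) < γ := by
  obtain ⟨X, -, hXpos, hLMI⟩ := hX
  obtain ⟨ε, hε₀, hε⟩ := hLMI.exists_pos_mul_norm_sq_le_re_map_ofReal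
  have hA : IsHurwitz 𝒜 := isHurwitz_of_boundedRealMatrix (γ := γ) hXpos.posSemidef hε₀ hε
  refine ⟨hA, (ciSup_le fun ω => specNorm_le_sqrt
    (norm_freqResp_mulVec_sq_le (X := X) hA hε₀.le hε ω)).trans_lt ?_⟩
  rw [Real.sqrt_lt' hγ]
  linarith

end
end
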